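/- Let 1/3 < α < (3 − √5)/2 and set β = (3 − √5)/2. If a sequence (ε_i)_{i≥1} with every ε_i ∈ {-1,0,1} is the unique {-1,0,1} β-expansion of the number ∑_{i=1}^∞ ε_i β^i, then (ε_i)_{i≥1} is also the unique {-1,0,1} α-expansion of the number ∑_{i=1}^∞ ε_i α^i. -/

import Mathlib

/-! Write `M = α / (1 - α)` for the largest value of a tail. For `1/3 ≤ α < 1` every point of
`[-M, M]` has an expansion, so `a` is the unique expansion iff no digit `a m ≠ -1` can be lowered by
one, i.e. the tail after it exceeds `M - 1`, and the same holds for `-a`. Now `M - 1 ≤ -α` exactly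
when `α ≤ β`, with equality at `β`. If the tail after `a m` starts with a digit `0` or `1` it exceeds
`-α M > M - 1` for every `α ≤ β`. If it starts with `-1`, the condition at `β` says that the rest of
the tail is positive, i.e. its first nonzero digit is `1`; this does not depend on the base, and at
`α` it gives the condition. -/

open MeasureTheory Filter Real
open scoped MeasureTheory

noncomputable section

/-- The middle-`(1-2α)` Cantor set `Γ_α = {∑_{i≥1} ε_i α^i : ε_i ∈ {0,1}}`. -/
def Gamma (α : ℝ) : Set ℝ :=
  {x | ∃ ε : ℕ → ℝ, (∀ i, ε i = 0 ∨ ε i = 1) ∧ x = ∑' i : ℕ, ε i * α ^ (i + 1)}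

/-- `a` is a `{-1,0,1}` `α`-expansion of `t`; `a i` is the digit `t_{i+1}`. -/
def IsExpansion (α t : ℝ) (a : ℕ → ℝ) : Prop :=
  (∀ i, a i = -1 ∨ a i = 0 ∨ a i = 1) ∧ t = ∑' i : ℕ, a i * α ^ (i + 1)

/-- The set of `t` having exactly one `{-1,0,1}` `α`-expansion. -/
def uniqSet (α : ℝ) : Set ℝ := {t | ∃! a : ℕ → ℝ, IsExpansion α t a}

/-- `D_α`: possible Hausdorff dimensions of `Γ_α ∩ (Γ_α + t)` for `t ∈ u_α`. -/
def D (α : ℝ) : Set ℝ :=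
  {d | ∃ t ∈ uniqSet α, d = (dimH (Gamma α ∩ ((· + t) '' Gamma α))).toReal}

def IsDigitSeq (a : ℕ → ℝ) : Prop := ∀ i, a i = -1 ∨ a i = 0 ∨ a i = 1

/-- `tailSum α a n = ∑_{j ≥ 0} a (n + j) α^(j+1)`; the index is written `j + n` so that
`tailSum α a 0` is definitionally the value `∑' i, a i * α ^ (i + 1)` of the whole expansion. -/
def tailSum (α : ℝ) (a : ℕ → ℝ) (n : ℕ) : ℝ := ∑' j : ℕ, a (j + n) * α ^ (j + 1)

def IsUniqueExpansion (α : ℝ) (a : ℕ → ℝ) : Prop :=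
  ∀ b, IsDigitSeq b → tailSum α b 0 = tailSum α a 0 → b = a

/-- No digit `a m` can be lowered by one: the tail after it would have to grow by one, beyond its
maximal value `α / (1 - α)`. -/
def NoLowering (α : ℝ) (a : ℕ → ℝ) : Prop :=
  ∀ m, a m ≠ -1 → α / (1 - α) - 1 < tailSum α a (m + 1)

namespace IsDigitSeq

variable {a : ℕ → ℝ}

lemma abs_le_one (ha : IsDigitSeq a) (i : ℕ) : |a i| ≤ 1 := by
  rcases ha i with h | h | h <;> simp [h]

lemma neg (ha : IsDigitSeq a) : IsDigitSeq (-a) := by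
  intro i
  rcases ha i with h | h | h <;> simp [h]

end IsDigitSeq

section TailSum

variable {α : ℝ} {a : ℕ → ℝ}

lemma IsDigitSeq.summable_mul_pow (ha : IsDigitSeq a) (h0 : 0 ≤ α) (h1 : α < 1) (n : ℕ) :
    Summable fun j : ℕ => a (j + n) * α ^ (j + 1) := by
  refine ((summable_geometric_of_lt_one h0 h1).mul_left α).of_norm_bounded fun j => ?_
  rw [norm_mul, norm_pow, Real.norm_of_nonneg h0, ← pow_succ']
  exact mul_le_of_le_one_left (by positivity) (ha.abs_le_one _)

lemma abs_tailSum_le (ha : IsDigitSeq a) (h0 : 0 ≤ α) (h1 : α < 1) (n : ℕ) :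
    |tailSum α a n| ≤ α / (1 - α) := by
  have hg := (hasSum_geometric_of_lt_one h0 h1).mul_left α
  rw [← div_eq_mul_inv] at hg
  rw [← Real.norm_eq_abs]
  refine tsum_of_norm_bounded hg fun j => ?_
  rw [norm_mul, norm_pow, Real.norm_of_nonneg h0, ← pow_succ']
  exact mul_le_of_le_one_left (by positivity) (ha.abs_le_one _)

lemma tailSum_eq_add (ha : IsDigitSeq a) (h0 : 0 ≤ α) (h1 : α < 1) (n : ℕ) :
    tailSum α a n = a n * α + α * tailSum α a (n + 1) := by
  rw [tailSum, (ha.summable_mul_pow h0 h1 n).tsum_eq_zero_add, tailSum, ← tsum_mul_left]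
  congr 1
  · simp
  · refine tsum_congr fun j => ?_
    rw [show j + 1 + n = j + (n + 1) by omega]
    ring

lemma tailSum_neg (n : ℕ) : tailSum α (-a) n = -tailSum α a n := by
  rw [tailSum, tailSum, ← tsum_neg]
  exact tsum_congr fun j => by simp [neg_mul]

lemma tailSum_eq_pow_mul_of_zeros (ha : IsDigitSeq a) (h0 : 0 ≤ α) (h1 : α < 1) {n k : ℕ}
    (hz : ∀ j < k, a (j + n) = 0) : tailSum α a n = α ^ k * tailSum α a (k + n) := by
  induction k with
  | zero => simp
  | succ k ih =>
    rw [ih fun j hj => hz j (by omega), tailSum_eq_add ha h0 h1 (k + n), hz k (by omega),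
      show k + n + 1 = k + 1 + n by omega]
    ring

lemma tailSum_zero_eq_of_eq_of_tailSum_eq {b : ℕ → ℝ} (ha : IsDigitSeq a) (hb : IsDigitSeq b)
    (h0 : 0 ≤ α) (h1 : α < 1) {m : ℕ} (hlt : ∀ i < m, b i = a i)
    (hm : tailSum α b m = tailSum α a m) : tailSum α b 0 = tailSum α a 0 := by
  induction m with
  | zero => exact hm
  | succ m ih =>
    refine ih (fun i hi => hlt i (by omega)) ?_
    rw [tailSum_eq_add ha h0 h1, tailSum_eq_add hb h0 h1, hm, hlt m (by omega)]

end TailSum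

section Greedy

variable {α : ℝ}

/-- For `α ≥ 1/3` the three intervals `d + [-M, M]`, `d ∈ {-1, 0, 1}`, `M = α / (1 - α) ≥ 1/2`,
cover `[-M, M] / α = [-1 - M, 1 + M]`. -/
lemma exists_digit_abs_div_sub_le (h1 : 1 / 3 ≤ α) (h2 : α < 1) {y : ℝ}
    (hy : |y| ≤ α / (1 - α)) :
    ∃ d : ℝ, (d = -1 ∨ d = 0 ∨ d = 1) ∧ |y / α - d| ≤ α / (1 - α) := by
  have hα : 0 < α := by linarith
  have hM : α / (1 - α) * (1 - α) = α := div_mul_cancel₀ _ (by linarith)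
  have hyα : y / α * α = y := div_mul_cancel₀ _ hα.ne'
  rw [abs_le] at hy
  by_cases hpos : α - α * (α / (1 - α)) ≤ y
  · exact ⟨1, by norm_num, abs_le.mpr ⟨by nlinarith, by nlinarith⟩⟩
  by_cases hneg : y ≤ α * (α / (1 - α)) - α
  · exact ⟨-1, by norm_num, abs_le.mpr ⟨by nlinarith, by nlinarith⟩⟩
  exact ⟨0, by norm_num, abs_le.mpr ⟨by nlinarith, by nlinarith⟩⟩

theorem exists_isDigitSeq_tailSum_eq (h1 : 1 / 3 ≤ α) (h2 : α < 1) {x : ℝ}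
    (hx : |x| ≤ α / (1 - α)) : ∃ c : ℕ → ℝ, IsDigitSeq c ∧ tailSum α c 0 = x := by
  have hα : 0 < α := by linarith
  choose! δ hδ using fun y (hy : |y| ≤ α / (1 - α)) => exists_digit_abs_div_sub_le h1 h2 hy
  set r : ℕ → ℝ := fun n => (fun y => y / α - δ y)^[n] x with hr
  have hr_succ (n : ℕ) : r (n + 1) = r n / α - δ (r n) := Function.iterate_succ_apply' _ _ _
  have hr_le (n : ℕ) : |r n| ≤ α / (1 - α) := by
    induction n with
    | zero => exact hx
    | succ n ih => rw [hr_succ]; exact (hδ _ ih).2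
  have hc : IsDigitSeq (fun n => δ (r n)) := fun n => (hδ _ (hr_le n)).1
  refine ⟨_, hc, ?_⟩
  have hpartial (n : ℕ) :
      ∑ i ∈ Finset.range n, δ (r i) * α ^ (i + 1) = x - α ^ n * r n := by
    induction n with
    | zero => simp [hr]
    | succ n ih =>
      rw [Finset.sum_range_succ, ih, hr_succ]
      field_simp
      ring
  have hrem : Tendsto (fun n => α ^ n * r n) atTop (nhds 0) := by
    have hgeom := (tendsto_pow_atTop_nhds_zero_of_lt_one hα.le h2).mul_const (α / (1 - α))
    rw [zero_mul] at hgeom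
    refine squeeze_zero_norm (fun n => ?_) hgeom
    rw [norm_mul, norm_pow, Real.norm_of_nonneg hα.le, Real.norm_eq_abs]
    exact mul_le_mul_of_nonneg_left (hr_le n) (by positivity)
  refine tendsto_nhds_unique (hc.summable_mul_pow hα.le h2 0).hasSum.tendsto_sum_nat ?_
  simp only [hpartial, add_zero]
  simpa using tendsto_const_nhds.sub hrem

end Greedy

section Uniqueness

variable {α : ℝ} {a : ℕ → ℝ}

lemma IsUniqueExpansion.neg (hu : IsUniqueExpansion α a) : IsUniqueExpansion α (-a) := by
  intro b hb hv
  rw [← hu (-b) hb.neg (by rw [tailSum_neg, hv, tailSum_neg, neg_neg]), neg_neg]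

theorem IsUniqueExpansion.noLowering (h1 : 1 / 3 ≤ α) (h2 : α < 1) (ha : IsDigitSeq a)
    (hu : IsUniqueExpansion α a) : NoLowering α a := by
  intro m hm
  by_contra! hle
  have h0 : 0 ≤ α := by linarith
  have hbd := abs_le.mp (abs_tailSum_le ha h0 h2 (m + 1))
  obtain ⟨c, hc, hcv⟩ := exists_isDigitSeq_tailSum_eq h1 h2 (x := 1 + tailSum α a (m + 1))
    (abs_le.mpr ⟨by linarith, by linarith⟩)
  -- lower the digit `a m` by one and let the tail `c` absorb the difference
  set b : ℕ → ℝ := fun i => if i < m then a i else if i = m then a m - 1 else c (i - (m + 1))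
    with hb_def
  have hbm : b m = a m - 1 := by simp [hb_def]
  have hb : IsDigitSeq b := by
    intro i
    rcases lt_trichotomy i m with hi | rfl | hi
    · simpa [hb_def, hi] using ha i
    · rw [hbm]
      rcases ha i with h | h | h
      · exact absurd h hm
      all_goals simp [h]
    · simpa [hb_def, hi.not_gt, hi.ne'] using hc (i - (m + 1))
  have hb_tail : tailSum α b (m + 1) = tailSum α c 0 := by
    refine tsum_congr fun j => ?_
    simp [hb_def, show ¬ j + (m + 1) < m by omega, show j + (m + 1) ≠ m by omega]
  have hbm_tail : tailSum α b m = tailSum α a m := by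
    rw [tailSum_eq_add hb h0 h2, tailSum_eq_add ha h0 h2, hb_tail, hcv, hbm]
    ring
  have hba := hu b hb (tailSum_zero_eq_of_eq_of_tailSum_eq ha hb h0 h2
    (fun i hi => by simp [hb_def, hi]) hbm_tail)
  have := congrFun hba m
  rw [hbm] at this
  linarith

lemma NoLowering.le_of_tailSum_eq {b : ℕ → ℝ} (hN : NoLowering α a) (ha : IsDigitSeq a)
    (hb : IsDigitSeq b) (h0 : 0 < α) (h1 : α < 1) {m : ℕ}
    (hm : tailSum α a m = tailSum α b m) : a m ≤ b m := by
  by_contra! hlt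
  have hstep : b m + 1 ≤ a m := by
    rcases ha m with h | h | h <;> rcases hb m with h' | h' | h' <;> linarith
  have hrel : a m + tailSum α a (m + 1) = b m + tailSum α b (m + 1) := by
    rw [tailSum_eq_add ha h0.le h1, tailSum_eq_add hb h0.le h1] at hm
    exact mul_left_cancel₀ h0.ne' (by linarith)
  have hlow := hN m (by linarith [abs_le.mp (hb.abs_le_one m)])
  have hbd := abs_le.mp (abs_tailSum_le hb h0.le h1 (m + 1))
  linarith

theorem isUniqueExpansion_of_noLowering (h0 : 0 < α) (h1 : α < 1) (ha : IsDigitSeq a)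
    (hN : NoLowering α a) (hN' : NoLowering α (-a)) : IsUniqueExpansion α a := by
  intro b hb hv
  have hdigit (m : ℕ) (hm : tailSum α a m = tailSum α b m) : a m = b m := by
    refine le_antisymm (hN.le_of_tailSum_eq ha hb h0 h1 hm) (neg_le_neg_iff.mp ?_)
    exact hN'.le_of_tailSum_eq ha.neg hb.neg h0 h1 (by rw [tailSum_neg, tailSum_neg, hm])
  have htail (m : ℕ) : tailSum α a m = tailSum α b m := by
    induction m with
    | zero => exact hv.symm
    | succ m ih =>
      have hrel := ih
      rw [tailSum_eq_add ha h0.le h1, tailSum_eq_add hb h0.le h1, hdigit m ih] at hrel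
      exact mul_left_cancel₀ h0.ne' (by linarith)
  funext m
  exact (hdigit m (htail m)).symm

end Uniqueness

section Transfer

variable {α : ℝ} {a : ℕ → ℝ}

lemma mul_tailSum_pos (ha : IsDigitSeq a) (h0 : 0 < α) (h2 : α < 1 / 2) {n : ℕ}
    (hn : a n ≠ 0) : 0 < a n * tailSum α a n := by
  have hM : α / (1 - α) < 1 := by rw [div_lt_one (by linarith)]; linarith
  have hbd := abs_le.mp (abs_tailSum_le ha h0.le (by linarith) (n + 1))
  rw [tailSum_eq_add ha h0.le (by linarith)]
  rcases ha n with h | h | h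
  · rw [h]; nlinarith
  · exact absurd h hn
  · rw [h]; nlinarith

lemma tailSum_pos_iff (ha : IsDigitSeq a) (h0 : 0 < α) (h2 : α < 1 / 2) (n : ℕ) :
    0 < tailSum α a n ↔ ∃ k, (∀ j < k, a (j + n) = 0) ∧ a (k + n) = 1 := by
  classical
  have h1 : α < 1 := by linarith
  constructor
  · intro hpos
    have hne : ∃ k, a (k + n) ≠ 0 := by
      by_contra! hz
      simp [tailSum, hz] at hpos
    have hz (j : ℕ) (hj : j < Nat.find hne) : a (j + n) = 0 := not_not.mp (Nat.find_min hne hj)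
    refine ⟨Nat.find hne, hz, ?_⟩
    have hsign := mul_tailSum_pos ha h0 h2 (Nat.find_spec hne)
    rw [tailSum_eq_pow_mul_of_zeros ha h0.le h1 hz] at hpos
    have htail := pos_of_mul_pos_right hpos (pow_nonneg h0.le _)
    rcases ha (Nat.find hne + n) with h | h | h
    · rw [h] at hsign; linarith
    · exact absurd h (Nat.find_spec hne)
    · exact h
  · rintro ⟨k, hz, hk⟩
    have hsign := mul_tailSum_pos ha h0 h2 (n := k + n) (by rw [hk]; exact one_ne_zero)
    rw [hk, one_mul] at hsign
    rw [tailSum_eq_pow_mul_of_zeros ha h0.le h1 hz]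
    positivity

theorem NoLowering.of_quadratic_sign {β : ℝ} (hα0 : 0 < α) (hα2 : α < 1 / 2)
    (hα : 0 ≤ α ^ 2 - 3 * α + 1) (hβ0 : 0 < β) (hβ2 : β < 1 / 2) (hβ : β ^ 2 - 3 * β + 1 ≤ 0)
    (ha : IsDigitSeq a) (hN : NoLowering β a) : NoLowering α a := by
  have hα1 : 0 < 1 - α := by linarith
  have hβ1 : 0 < 1 - β := by linarith
  have hMα : α / (1 - α) - 1 ≤ -α := by
    rw [div_sub_one hα1.ne', div_le_iff₀ hα1]; nlinarith
  have hMβ : -β ≤ β / (1 - β) - 1 := by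
    rw [div_sub_one hβ1.ne', le_div_iff₀ hβ1]; nlinarith
  intro m hm
  have hbd := abs_le.mp (abs_tailSum_le ha hα0.le (by linarith) (m + 2))
  rw [tailSum_eq_add ha hα0.le (by linarith)]
  rcases ha (m + 1) with h | h | h
  · have hβpos : 0 < tailSum β a (m + 1 + 1) := by
      have := hN m hm
      rw [tailSum_eq_add ha hβ0.le (by linarith), h] at this
      nlinarith
    rw [tailSum_pos_iff ha hβ0 hβ2, ← tailSum_pos_iff ha hα0 hα2] at hβpos
    rw [h]
    nlinarith
  all_goals
    have hM : α / (1 - α) < 1 := by rw [div_lt_one hα1]; linarith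
    rw [h]
    nlinarith

end Transfer

lemma golden_sq_sub : ((3 - √5) / 2) ^ 2 - 3 * ((3 - √5) / 2) + 1 = 0 := by
  ring_nf
  rw [Real.sq_sqrt (by norm_num)]
  ring

lemma golden_mem_Ioo : (3 - √5) / 2 ∈ Set.Ioo (1 / 3 : ℝ) (1 / 2) := by
  have h5 : √5 ^ 2 = 5 := Real.sq_sqrt (by norm_num)
  constructor <;> nlinarith [Real.sqrt_nonneg 5]

theorem stmt19 (α β : ℝ) (hβ : β = (3 - Real.sqrt 5) / 2)
    (hα1 : 1 / 3 < α) (hα2 : α < β)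
    (ε : ℕ → ℝ) (hdig : ∀ i, ε i = -1 ∨ ε i = 0 ∨ ε i = 1)
    (huniqβ : ∀ b : ℕ → ℝ, IsExpansion β (∑' i : ℕ, ε i * β ^ (i + 1)) b → b = ε) :
    IsExpansion α (∑' i : ℕ, ε i * α ^ (i + 1)) ε ∧
      ∀ b : ℕ → ℝ, IsExpansion α (∑' i : ℕ, ε i * α ^ (i + 1)) b → b = ε := by
  obtain ⟨hβ1, hβ2⟩ : β ∈ Set.Ioo (1 / 3 : ℝ) (1 / 2) := hβ ▸ golden_mem_Ioo
  have hβsq : β ^ 2 - 3 * β + 1 = 0 := hβ ▸ golden_sq_sub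
  -- `α² - 3α + 1 = (β - α) (3 - α - β)`
  have hαsq : 0 ≤ α ^ 2 - 3 * α + 1 := by nlinarith
  have hα0 : 0 < α := by linarith
  have hε : IsDigitSeq ε := hdig
  have huβ : IsUniqueExpansion β ε := fun b hb hv => huniqβ b ⟨hb, hv.symm⟩
  have hNoLowering (a : ℕ → ℝ) (ha : IsDigitSeq a) (hu : IsUniqueExpansion β a) :
      NoLowering α a :=
    (hu.noLowering hβ1.le (by linarith) ha).of_quadratic_sign hα0 (by linarith) hαsq
      (by linarith) hβ2 hβsq.le ha
  have huα : IsUniqueExpansion α ε := isUniqueExpansion_of_noLowering hα0 (by linarith) hε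
    (hNoLowering ε hε huβ) (hNoLowering (-ε) hε.neg huβ.neg)
  exact ⟨⟨hdig, rfl⟩, fun b hb => huα b hb.1 hb.2.symm⟩
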